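/- Let D₂ₙ be the dihedral group with presentation ⟨r, s | rⁿ = s² = e, srs = r⁻¹⟩. Then the G-graph Γ(D₂ₙ, {r,s}) is isomorphic to the complete bipartite graph K_{2,n}. -/

import Mathlib

/-- The right coset of the cyclic subgroup `⟨s⟩` containing `g`. -/
def rcoset {G : Type*} [Group G] (s g : G) : Set G := {x | ∃ k : ℤ, x = s ^ k * g}

/-- The G-graph `Γ(G, {s,t})` of a group with a two-element generating set, as a simple
graph: vertices are right cosets of `⟨s⟩` (left summand) and of `⟨t⟩` (right summand),
with an edge between a coset of `⟨s⟩` and a coset of `⟨t⟩` iff they intersect. -/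
def gGraphPair {G : Type*} [Group G] (s t : G) :
    SimpleGraph ({C : Set G // ∃ g, C = rcoset s g} ⊕ {C : Set G // ∃ g, C = rcoset t g}) :=
  SimpleGraph.fromRel (fun v w => ∃ a b, v = Sum.inl a ∧ w = Sum.inr b ∧ (a.1 ∩ b.1).Nonempty)

lemma rcoset_shift {G : Type*} [Group G] (t g : G) (k : ℤ) :
    rcoset t (t ^ k * g) = rcoset t g := by
  ext x
  constructor
  · rintro ⟨j, rfl⟩
    exact ⟨j + k, by rw [zpow_add, mul_assoc]⟩
  · rintro ⟨j, rfl⟩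
    exact ⟨j - k, by rw [zpow_sub, mul_assoc]; group⟩

lemma mem_rcoset_self {G : Type*} [Group G] (t g : G) : g ∈ rcoset t g :=
  ⟨0, by simp⟩

/-- the G-graph of the dihedral group
`D₂ₙ = ⟨r, s | rⁿ = s² = e, srs = r⁻¹⟩` of order `2n` with respect to `{r, s}` is
isomorphic to the complete bipartite graph `K_{2,n}`. -/
theorem gGraph_dihedral_rotation_reflection {G : Type*} [Group G] [Fintype G]
    (n : ℕ) (hn : 1 ≤ n) (r s : G)
    (hr : orderOf r = n) (hs : s ^ 2 = 1) (hs1 : s ≠ 1)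
    (hrel : s * r * s = r⁻¹) (hcard : Fintype.card G = 2 * n)
    (hgen : Subgroup.closure ({r, s} : Set G) = ⊤) :
    Nonempty (gGraphPair r s ≃g completeBipartiteGraph (Fin 2) (Fin n)) := by
  have hss : s * s = 1 := by rw [← sq]; exact hs
  -- commutation rule
  have hcomm : ∀ k : ℤ, s * r ^ k = r ^ (-k) * s := by
    have h1 : SemiconjBy s r r⁻¹ := by
      unfold SemiconjBy
      calc s * r = s * r * (s * s) := by rw [hss, mul_one]
      _ = (s * r * s) * s := by group
      _ = r⁻¹ * s := by rw [hrel]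
    intro k
    have := h1.zpow_right k
    rwa [inv_zpow, ← zpow_neg] at this
  -- powers of s
  have hsz : ∀ k : ℤ, s ^ k = 1 ∨ s ^ k = s := by
    intro k
    have h2 : s ^ (2:ℤ) = 1 := by
      rw [show (2:ℤ) = ((2:ℕ):ℤ) by norm_num, zpow_natCast, hs]
    rcases Int.even_or_odd k with ⟨m, hm⟩ | ⟨m, hm⟩
    · left
      rw [hm, ← two_mul, zpow_mul, h2, one_zpow]
    · right
      rw [hm, zpow_add, zpow_mul, h2, one_zpow, one_mul, zpow_one]
  -- the decomposition subgroup
  have hdecomp : ∀ x : G, ∃ m : ℤ, x = r ^ m ∨ x = r ^ m * s := by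
    let H : Subgroup G :=
      { carrier := {x | ∃ m : ℤ, x = r ^ m ∨ x = r ^ m * s}
        one_mem' := ⟨0, Or.inl (by simp)⟩
        mul_mem' := by
          rintro x y ⟨a, ha | ha⟩ ⟨b, hb | hb⟩ <;> subst ha <;> subst hb
          · exact ⟨a + b, Or.inl (zpow_add r a b).symm⟩
          · exact ⟨a + b, Or.inr (by rw [zpow_add, mul_assoc])⟩
          · refine ⟨a - b, Or.inr ?_⟩
            calc r ^ a * s * r ^ b = r ^ a * (s * r ^ b) := by rw [mul_assoc]
            _ = r ^ a * (r ^ (-b) * s) := by rw [hcomm]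
            _ = r ^ (a - b) * s := by rw [← mul_assoc, ← zpow_add]; ring_nf
          · refine ⟨a - b, Or.inl ?_⟩
            calc r ^ a * s * (r ^ b * s) = r ^ a * (s * r ^ b) * s := by group
            _ = r ^ a * (r ^ (-b) * s) * s := by rw [hcomm]
            _ = r ^ (a - b) * (s * s) := by rw [← mul_assoc, ← mul_assoc, ← zpow_add]; ring_nf
            _ = r ^ (a - b) := by rw [hss, mul_one]
        inv_mem' := by
          rintro x ⟨a, ha | ha⟩ <;> subst ha
          · exact ⟨-a, Or.inl (by rw [zpow_neg])⟩
          · refine ⟨a, Or.inr ?_⟩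
            have hsinv : s⁻¹ = s := by rw [inv_eq_iff_mul_eq_one]; exact hss
            calc (r ^ a * s)⁻¹ = s⁻¹ * (r ^ a)⁻¹ := by rw [mul_inv_rev]
            _ = s * r ^ (-a) := by rw [hsinv, ← zpow_neg]
            _ = r ^ a * s := by rw [hcomm, neg_neg] }
    intro x
    have hx : x ∈ H := by
      have : Subgroup.closure ({r, s} : Set G) ≤ H := by
        rw [Subgroup.closure_le]
        intro y hy
        simp only [Set.mem_insert_iff, Set.mem_singleton_iff] at hy
        rcases hy with h | h
        · rw [h]; exact ⟨1, Or.inl (by simp)⟩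
        · rw [h]; exact ⟨0, Or.inr (by simp)⟩
      rw [hgen] at this
      exact this (Subgroup.mem_top x)
    exact hx
  -- s is not a power of r
  have hsr : ∀ m : ℤ, s ≠ r ^ m := by
    intro m hm
    have htop : Subgroup.zpowers r = ⊤ := by
      rw [← top_le_iff, ← hgen, Subgroup.closure_le]
      intro y hy
      simp only [Set.mem_insert_iff, Set.mem_singleton_iff] at hy
      rcases hy with h | h
      · rw [h]; exact Subgroup.mem_zpowers r
      · rw [h, hm]; exact zpow_mem (Subgroup.mem_zpowers r) m
    have h1 : Nat.card (Subgroup.zpowers r) = n := by rw [Nat.card_zpowers, hr]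
    have h2 : Nat.card (Subgroup.zpowers r) = 2 * n := by
      rw [htop]
      rw [Nat.card_congr Subgroup.topEquiv.toEquiv, Nat.card_eq_fintype_card, hcard]
    omega
  -- every r-coset meets every s-coset
  have hmeet : ∀ g h : G, (rcoset r g ∩ rcoset s h).Nonempty := by
    intro g h
    obtain ⟨m, hm | hm⟩ := hdecomp (g * h⁻¹)
    · refine ⟨h, ⟨-m, ?_⟩, mem_rcoset_self s h⟩
      have : g = r ^ m * h := by rw [← hm]; group
      rw [this]; group
    · refine ⟨s * h, ⟨-m, ?_⟩, ⟨1, by rw [zpow_one]⟩⟩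
      have : g = r ^ m * (s * h) := by rw [← mul_assoc, ← hm]; group
      rw [this]; group
  have hnpos : 0 < n := hn
  -- reduction of s-cosets of powers of r to the standard range
  have hred : ∀ m : ℤ, ∃ k : Fin n, rcoset s (r ^ m) = rcoset s (r ^ (k : ℕ)) := by
    intro m
    have hrn : r ^ (n : ℤ) = 1 := by
      rw [zpow_natCast, ← hr, pow_orderOf_eq_one]
    have hmod : r ^ m = r ^ (m % (n : ℤ)) := by
      conv_lhs => rw [show m = (n : ℤ) * (m / (n : ℤ)) + m % (n : ℤ) from (Int.mul_ediv_add_emod m n).symm]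
      rw [zpow_add, zpow_mul, hrn, one_zpow, one_mul]
    have h0 : 0 ≤ m % (n : ℤ) := Int.emod_nonneg m (by exact_mod_cast hnpos.ne')
    have h1 : m % (n : ℤ) < (n : ℤ) := Int.emod_lt_of_pos m (by exact_mod_cast hnpos)
    refine ⟨⟨(m % (n : ℤ)).toNat, by omega⟩, ?_⟩
    rw [hmod, ← zpow_natCast]
    simp only [Fin.val_mk]
    rw [Int.toNat_of_nonneg h0]
  -- the equivalence on r-cosets
  have hne01 : rcoset r 1 ≠ rcoset r s := by
    intro hkey
    have : s ∈ rcoset r 1 := hkey ▸ mem_rcoset_self r s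
    obtain ⟨k, hk⟩ := this
    exact hsr k (by rw [hk, mul_one])
  have hA : Function.Bijective (fun i : Fin 2 =>
      (if i = 0 then ⟨rcoset r 1, 1, rfl⟩ else ⟨rcoset r s, s, rfl⟩ :
        {C : Set G // ∃ g, C = rcoset r g})) := by
    constructor
    · intro i j hij
      fin_cases i <;> fin_cases j <;> simp only [] at hij ⊢
      · exact absurd (show rcoset r 1 = rcoset r s by simpa using hij) hne01
      · exact absurd (show rcoset r s = rcoset r 1 by simpa using hij).symm hne01
    · rintro ⟨C, g, rfl⟩
      obtain ⟨m, hm | hm⟩ := hdecomp g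
      · refine ⟨0, ?_⟩
        have h : rcoset r g = rcoset r 1 := by
          rw [hm, ← mul_one (r ^ m), rcoset_shift]
        simp only [reduceIte]
        exact Subtype.ext h.symm
      · refine ⟨1, ?_⟩
        have h : rcoset r g = rcoset r s := by
          rw [hm, rcoset_shift]
        simp only [if_neg (show (1 : Fin 2) ≠ 0 by decide)]
        exact Subtype.ext h.symm
  -- the equivalence on s-cosets
  have hB : Function.Bijective (fun k : Fin n =>
      (⟨rcoset s (r ^ (k : ℕ)), r ^ (k : ℕ), rfl⟩ :
        {C : Set G // ∃ g, C = rcoset s g})) := by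
    constructor
    · intro i j hij
      have h1 : rcoset s (r ^ (i : ℕ)) = rcoset s (r ^ (j : ℕ)) := Subtype.ext_iff.mp hij
      have h2 : r ^ (j : ℕ) ∈ rcoset s (r ^ (i : ℕ)) := h1 ▸ mem_rcoset_self s (r ^ (j : ℕ))
      obtain ⟨k, hk⟩ := h2
      rcases hsz k with h | h
      · rw [h, one_mul] at hk
        have := pow_injOn_Iio_orderOf (x := r)
          (by rw [hr]; exact Set.mem_Iio.mpr j.isLt)
          (by rw [hr]; exact Set.mem_Iio.mpr i.isLt) hk
        exact Fin.ext this.symm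
      · exfalso
        rw [h] at hk
        apply hsr ((i : ℤ) + (j : ℕ))
        have : (r : G) ^ ((j : ℕ) : ℤ) = s * r ^ ((i : ℕ) : ℤ) := by
          rw [zpow_natCast, zpow_natCast, hk]
        rw [hcomm] at this
        rw [zpow_add]
        calc s = r ^ ((i : ℕ) : ℤ) * (r ^ (-((i : ℕ) : ℤ)) * s) := by group
        _ = r ^ ((i : ℕ) : ℤ) * r ^ ((j : ℕ) : ℤ) := by rw [← this]
    · rintro ⟨C, g, rfl⟩
      obtain ⟨m, hm | hm⟩ := hdecomp g
      · obtain ⟨k, hk⟩ := hred m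
        refine ⟨k, Subtype.ext ?_⟩
        show rcoset s (r ^ (k : ℕ)) = rcoset s g
        rw [hm, hk]
      · have hsg : rcoset s g = rcoset s (r ^ (-m)) := by
          have : r ^ (-m) = s ^ (1:ℤ) * g := by
            rw [zpow_one, hm, ← mul_assoc, hcomm, mul_assoc, hss, mul_one]
          rw [this, rcoset_shift]
        obtain ⟨k, hk⟩ := hred (-m)
        refine ⟨k, Subtype.ext ?_⟩
        show rcoset s (r ^ (k : ℕ)) = rcoset s g
        rw [hsg, hk]
  let eA := (Equiv.ofBijective _ hA).symm
  let eB := (Equiv.ofBijective _ hB).symm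
  refine ⟨⟨Equiv.sumCongr eA eB, ?_⟩⟩
  have hadj : ∀ (a : {C : Set G // ∃ g, C = rcoset r g}) (b : {C : Set G // ∃ g, C = rcoset s g}),
      (gGraphPair r s).Adj (Sum.inl a) (Sum.inr b) := by
    intro a b
    rw [gGraphPair, SimpleGraph.fromRel_adj]
    refine ⟨by simp, Or.inl ⟨a, b, rfl, rfl, ?_⟩⟩
    obtain ⟨g, hg⟩ := a.2
    obtain ⟨h, hh⟩ := b.2
    rw [hg, hh]
    exact hmeet g h
  rintro (a | b) (a' | b')
  · refine iff_of_false ?_ ?_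
    · simp [completeBipartiteGraph]
    · intro h
      rw [gGraphPair, SimpleGraph.fromRel_adj] at h
      obtain ⟨-, ⟨x, y, hx, hy, -⟩ | ⟨x, y, hx, hy, -⟩⟩ := h <;> simp at hx hy
  · exact iff_of_true (by simp [completeBipartiteGraph]) (hadj a b')
  · exact iff_of_true (by simp [completeBipartiteGraph]) ((gGraphPair r s).adj_symm (hadj a' b))
  · refine iff_of_false ?_ ?_
    · simp [completeBipartiteGraph]
    · intro h
      rw [gGraphPair, SimpleGraph.fromRel_adj] at h
      obtain ⟨-, ⟨x, y, hx, hy, -⟩ | ⟨x, y, hx, hy, -⟩⟩ := h <;> simp at hx hy
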